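/- For every n ≥ 1 there exists a constant C > 0, depending only on n, such that for every Borel measure μ on ℝ^{n+1}: C^{-1} λ(μ) ≤ sup_{x ∈ ℝ^{n+1}, R > 0} μ(B_R(x))/Rⁿ ≤ C λ(μ) (as inequalities in [0,∞]); that is, the entropy and the volume-growth quantity sup_{x,R} μ(B_R(x))/Rⁿ are equivalent up to a dimensional constant. -/
import Mathlib

open MeasureTheory Metric Set ENNReal

/-- The F-functional, valued in `[0,∞]`:
`F_{x₀,t₀}(μ) = (4π t₀)^{-n/2} ∫ exp(-‖x-x₀‖²/(4t₀)) dμ(x)`. -/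
noncomputable def Fe (n : ℕ) (μ : Measure (EuclideanSpace ℝ (Fin (n + 1))))
    (x₀ : EuclideanSpace ℝ (Fin (n + 1))) (t₀ : ℝ) : ℝ≥0∞ :=
  ENNReal.ofReal ((4 * Real.pi * t₀) ^ (-(n : ℝ) / 2)) *
    ∫⁻ x, ENNReal.ofReal (Real.exp (-‖x - x₀‖ ^ 2 / (4 * t₀))) ∂μ

/-- The entropy `λ(μ) = sup {F_{x₀,t₀}(μ) : x₀ ∈ ℝ^{n+1}, t₀ > 0}`, valued in `[0,∞]`. -/
noncomputable def entropyE (n : ℕ) (μ : Measure (EuclideanSpace ℝ (Fin (n + 1)))) : ℝ≥0∞ :=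
  ⨆ (x₀ : EuclideanSpace ℝ (Fin (n + 1))) (t₀ : ℝ) (_ : 0 < t₀), Fe n μ x₀ t₀

/-- The volume-growth quantity `sup_{x, R>0} μ(B_R(x))/Rⁿ`, valued in `[0,∞]`. -/
noncomputable def volGrowth (n : ℕ) (μ : Measure (EuclideanSpace ℝ (Fin (n + 1)))) : ℝ≥0∞ :=
  ⨆ (x : EuclideanSpace ℝ (Fin (n + 1))) (R : ℝ) (_ : 0 < R),
    μ (ball x R) / ENNReal.ofReal (R ^ n)

noncomputable def cseq : ℕ → ℝ
  | 0 => 1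
  | (k+1) => Real.exp (-(4^k : ℝ))

noncomputable def Mconst (n : ℕ) : ℝ := 2^n + 2 * n.factorial * 4^n

lemma Mconst_pos (n : ℕ) : 0 < Mconst n := by unfold Mconst; positivity

lemma cseq_nonneg (k : ℕ) : 0 ≤ cseq k := by
  cases k with
  | zero => norm_num [cseq]
  | succ k => exact (Real.exp_pos _).le

lemma cseq_bound (n : ℕ) (hn : 1 ≤ n) (k : ℕ) :
    cseq k * ((2:ℝ)^(k+1))^n ≤ Mconst n * (1/2)^k := by
  cases k with
  | zero =>
    simp only [cseq, zero_add, pow_one, one_mul, pow_zero, mul_one, Mconst]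
    have : (0:ℝ) ≤ 2 * n.factorial * 4^n := by positivity
    linarith
  | succ k =>
    set a : ℝ := (2:ℝ)^k with ha_def
    have hA : (0:ℝ) < a := by positivity
    have ha : (1:ℝ) ≤ a := one_le_pow₀ (by norm_num)
    have h4 : (4:ℝ)^k = a^2 := by
      rw [ha_def, show (4:ℝ) = 2^2 by norm_num, ← pow_mul, ← pow_mul, Nat.mul_comm]
    have hfac : ((4:ℝ)^k)^n / n.factorial ≤ Real.exp ((4:ℝ)^k) :=
      Real.pow_div_factorial_le_exp _ (by positivity) n
    have hfac' : ((4:ℝ)^k)^n ≤ (n.factorial : ℝ) * Real.exp ((4:ℝ)^k) := by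
      rw [div_le_iff₀ (by positivity : (0:ℝ) < (n.factorial:ℝ))] at hfac; linarith
    have hexp : Real.exp (-((4:ℝ)^k)) ≤ (n.factorial : ℝ) / a^(2*n) := by
      have h2 : ((4:ℝ)^k)^n = a^(2*n) := by rw [h4, ← pow_mul]
      rw [le_div_iff₀ (by positivity : (0:ℝ) < a^(2*n)), ← h2]
      calc Real.exp (-((4:ℝ)^k)) * ((4:ℝ)^k)^n
          ≤ Real.exp (-((4:ℝ)^k)) * ((n.factorial : ℝ) * Real.exp ((4:ℝ)^k)) := by
            exact mul_le_mul_of_nonneg_left hfac' (Real.exp_pos _).le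
        _ = (n.factorial : ℝ) * (Real.exp (-((4:ℝ)^k)) * Real.exp ((4:ℝ)^k)) := by ring
        _ = (n.factorial : ℝ) := by rw [← Real.exp_add]; simp
    have e0 : (2:ℝ)^(k+1+1) = 4 * a := by rw [ha_def, pow_add]; ring
    have e1 : ((2:ℝ)^(k+1+1))^n = 4^n * a^n := by rw [e0, mul_pow]
    have h12 : ((1:ℝ)/2)^(k+1) = a⁻¹ * (1/2) := by
      rw [ha_def]; rw [pow_succ]; norm_num [← inv_pow]
    have hq : a^n / a^(2*n) ≤ a⁻¹ := by
      rw [div_le_iff₀ (by positivity : (0:ℝ) < a^(2*n)), inv_mul_eq_div, le_div_iff₀ hA]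
      calc a^n * a = a^(n+1) := (pow_succ a n).symm
        _ ≤ a^(2*n) := pow_le_pow_right₀ ha (by omega)
    have hM : (n.factorial : ℝ) * 4^n ≤ Mconst n * (1/2) := by
      unfold Mconst
      have : (0:ℝ) ≤ 2^n := by positivity
      linarith
    show Real.exp (-(4^k : ℝ)) * ((2:ℝ)^(k+1+1))^n ≤ Mconst n * (1/2)^(k+1)
    rw [e1, h12]
    calc Real.exp (-((4:ℝ)^k)) * (4^n * a^n)
        ≤ ((n.factorial : ℝ) / a^(2*n)) * (4^n * a^n) := by
          exact mul_le_mul_of_nonneg_right hexp (by positivity)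
      _ = ((n.factorial : ℝ) * 4^n) * (a^n / a^(2*n)) := by ring
      _ ≤ ((n.factorial : ℝ) * 4^n) * a⁻¹ := mul_le_mul_of_nonneg_left hq (by positivity)
      _ ≤ (Mconst n * (1/2)) * a⁻¹ := mul_le_mul_of_nonneg_right hM (by positivity)
      _ = Mconst n * (a⁻¹ * (1/2)) := by ring

lemma ball_le_volGrowth (n : ℕ) (μ : Measure (EuclideanSpace ℝ (Fin (n + 1))))
    (x : EuclideanSpace ℝ (Fin (n + 1))) (R : ℝ) (hR : 0 < R) :
    μ (ball x R) ≤ volGrowth n μ * ENNReal.ofReal (R ^ n) := by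
  have h1 : μ (ball x R) / ENNReal.ofReal (R ^ n) ≤ volGrowth n μ := by
    unfold volGrowth
    exact le_iSup_of_le x (le_iSup_of_le R (le_iSup_of_le hR le_rfl))
  rwa [ENNReal.div_le_iff ((ENNReal.ofReal_pos.2 (pow_pos hR n)).ne') ENNReal.ofReal_ne_top] at h1

lemma exp_term_measurable (n : ℕ) (x₀ : EuclideanSpace ℝ (Fin (n + 1))) (t₀ : ℝ) :
    Measurable (fun x : EuclideanSpace ℝ (Fin (n + 1)) =>
      ENNReal.ofReal (Real.exp (-‖x - x₀‖ ^ 2 / (4 * t₀)))) := by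
  have hc : Continuous fun x : EuclideanSpace ℝ (Fin (n + 1)) =>
      Real.exp (-‖x - x₀‖ ^ 2 / (4 * t₀)) :=
    Real.continuous_exp.comp ((((continuous_id.sub continuous_const).norm.pow 2).neg).div_const _)
  exact ENNReal.measurable_ofReal.comp hc.measurable

lemma ball_le_entropy (n : ℕ) (μ : Measure (EuclideanSpace ℝ (Fin (n + 1))))
    (x : EuclideanSpace ℝ (Fin (n + 1))) (R : ℝ) (hR : 0 < R) :
    μ (ball x R) ≤ ENNReal.ofReal (Real.exp 1 * (4 * Real.pi) ^ n * R ^ n) * entropyE n μ := by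
  have hπ : 0 < Real.pi := Real.pi_pos
  have h4π : (1:ℝ) ≤ 4 * Real.pi := by nlinarith [Real.pi_gt_three]
  set f : EuclideanSpace ℝ (Fin (n + 1)) → ℝ≥0∞ :=
    fun y => ENNReal.ofReal (Real.exp (-‖y - x‖ ^ 2 / (4 * R ^ 2))) with hf
  -- lower bound for the Gaussian integral
  have hlow : ENNReal.ofReal (Real.exp (-(4⁻¹ : ℝ))) * μ (ball x R) ≤ ∫⁻ y, f y ∂μ := by
    calc ENNReal.ofReal (Real.exp (-(4⁻¹ : ℝ))) * μ (ball x R)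
        = ∫⁻ _ in ball x R, ENNReal.ofReal (Real.exp (-(4⁻¹ : ℝ))) ∂μ :=
          (setLIntegral_const _ _).symm
      _ ≤ ∫⁻ y in ball x R, f y ∂μ := by
          refine setLIntegral_mono (exp_term_measurable n x (R^2)) fun y hy => ?_
          refine ENNReal.ofReal_le_ofReal (Real.exp_le_exp.2 ?_)
          have hd : ‖y - x‖ < R := by rw [← dist_eq_norm]; exact mem_ball.1 hy
          have h2 : ‖y - x‖ ^ 2 / (4 * R ^ 2) ≤ 4⁻¹ := by
            rw [div_le_iff₀ (by positivity)]
            nlinarith [norm_nonneg (y - x)]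
          rw [neg_div]; linarith
      _ ≤ ∫⁻ y, f y ∂μ := setLIntegral_le_lintegral _ _
  have hI : μ (ball x R) ≤ ENNReal.ofReal (Real.exp (4⁻¹ : ℝ)) * ∫⁻ y, f y ∂μ := by
    calc μ (ball x R)
        = (ENNReal.ofReal (Real.exp (4⁻¹ : ℝ)) * ENNReal.ofReal (Real.exp (-(4⁻¹ : ℝ)))) *
            μ (ball x R) := by
          rw [← ENNReal.ofReal_mul (Real.exp_pos _).le, ← Real.exp_add]
          norm_num
      _ = ENNReal.ofReal (Real.exp (4⁻¹ : ℝ)) *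
            (ENNReal.ofReal (Real.exp (-(4⁻¹ : ℝ))) * μ (ball x R)) := by rw [mul_assoc]
      _ ≤ ENNReal.ofReal (Real.exp (4⁻¹ : ℝ)) * ∫⁻ y, f y ∂μ := mul_le_mul_right hlow _
  -- relate the integral to Fe
  have hbase : (0:ℝ) < 4 * Real.pi * R ^ 2 := by positivity
  have hFe : (∫⁻ y, f y ∂μ) =
      ENNReal.ofReal ((4 * Real.pi * R ^ 2) ^ ((n : ℝ) / 2)) * Fe n μ x (R ^ 2) := by
    rw [Fe, ← mul_assoc, ← ENNReal.ofReal_mul (Real.rpow_nonneg hbase.le _),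
      ← Real.rpow_add hbase, show ((n:ℝ)/2 + -(n:ℝ)/2) = 0 by ring, Real.rpow_zero,
      ENNReal.ofReal_one, one_mul]
  have hent : Fe n μ x (R ^ 2) ≤ entropyE n μ := by
    unfold entropyE
    exact le_iSup_of_le x (le_iSup_of_le (R ^ 2) (le_iSup_of_le (by positivity) le_rfl))
  -- constant comparison
  have hconst : Real.exp (4⁻¹ : ℝ) * (4 * Real.pi * R ^ 2) ^ ((n : ℝ) / 2) ≤
      Real.exp 1 * (4 * Real.pi) ^ n * R ^ n := by
    have hR2 : ((R ^ 2 : ℝ)) ^ ((n : ℝ) / 2) = R ^ n := by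
      rw [← Real.rpow_natCast R 2, ← Real.rpow_mul hR.le, ← Real.rpow_natCast R n]
      congr 1
      push_cast; ring
    have hsplit : (4 * Real.pi * R ^ 2) ^ ((n : ℝ) / 2) =
        (4 * Real.pi) ^ ((n : ℝ) / 2) * R ^ n := by
      rw [Real.mul_rpow (by positivity) (by positivity), hR2]
    have hpow : (4 * Real.pi) ^ ((n : ℝ) / 2) ≤ (4 * Real.pi) ^ n := by
      have := Real.rpow_le_rpow_of_exponent_le h4π
        (show (n : ℝ) / 2 ≤ (n : ℝ) by
          have : (0:ℝ) ≤ (n : ℝ) := Nat.cast_nonneg n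
          linarith)
      rwa [Real.rpow_natCast] at this
    have hexp : Real.exp (4⁻¹ : ℝ) ≤ Real.exp 1 := Real.exp_le_exp.2 (by norm_num)
    have h1 : (0:ℝ) ≤ R ^ n := by positivity
    have h2 : (0:ℝ) ≤ (4 * Real.pi) ^ ((n:ℝ)/2) := Real.rpow_nonneg (by positivity) _
    rw [hsplit]
    calc Real.exp (4⁻¹:ℝ) * ((4 * Real.pi) ^ ((n:ℝ)/2) * R ^ n)
        ≤ Real.exp 1 * ((4 * Real.pi) ^ n * R ^ n) :=
          mul_le_mul hexp (mul_le_mul_of_nonneg_right hpow h1) (by positivity)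
            (Real.exp_pos 1).le
      _ = Real.exp 1 * (4 * Real.pi) ^ n * R ^ n := by ring
  calc μ (ball x R)
      ≤ ENNReal.ofReal (Real.exp (4⁻¹ : ℝ)) * ∫⁻ y, f y ∂μ := hI
    _ = ENNReal.ofReal (Real.exp (4⁻¹ : ℝ) * (4 * Real.pi * R ^ 2) ^ ((n : ℝ) / 2)) *
          Fe n μ x (R ^ 2) := by
        rw [hFe, ← mul_assoc, ← ENNReal.ofReal_mul (Real.exp_pos _).le]
    _ ≤ ENNReal.ofReal (Real.exp 1 * (4 * Real.pi) ^ n * R ^ n) * Fe n μ x (R ^ 2) :=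
        mul_le_mul_left (ENNReal.ofReal_le_ofReal hconst) _
    _ ≤ ENNReal.ofReal (Real.exp 1 * (4 * Real.pi) ^ n * R ^ n) * entropyE n μ :=
        mul_le_mul_right hent _

lemma Fe_le (n : ℕ) (hn : 1 ≤ n) (μ : Measure (EuclideanSpace ℝ (Fin (n + 1))))
    (x₀ : EuclideanSpace ℝ (Fin (n + 1))) (t₀ : ℝ) (ht : 0 < t₀) :
    Fe n μ x₀ t₀ ≤ ENNReal.ofReal (2 * Mconst n) * volGrowth n μ := by
  have hπ : 0 < Real.pi := Real.pi_pos
  set r : ℝ := Real.sqrt t₀ with hr_def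
  have hr : 0 < r := Real.sqrt_pos.2 ht
  set V : ℝ≥0∞ := volGrowth n μ with hV
  set f : EuclideanSpace ℝ (Fin (n + 1)) → ℝ≥0∞ :=
    fun y => ENNReal.ofReal (Real.exp (-‖y - x₀‖ ^ 2 / (4 * t₀))) with hf
  set A : ℕ → Set (EuclideanSpace ℝ (Fin (n + 1))) :=
    fun k => ball x₀ (2^(k+1) * r) \ ball x₀ (if k = 0 then 0 else 2^k * r) with hA
  have hsub : ∀ k, A k ⊆ ball x₀ (2^(k+1) * r) := fun k => diff_subset
  -- the annuli cover everything
  have hcover : (⋃ k, A k) = univ := by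
    ext y
    simp only [mem_iUnion, mem_univ, iff_true]
    obtain ⟨k, hk⟩ : ∃ k : ℕ, dist y x₀ < 2^k * r := by
      obtain ⟨k, hk⟩ := pow_unbounded_of_one_lt (dist y x₀ / r) (by norm_num : (1:ℝ) < 2)
      exact ⟨k, by rwa [div_lt_iff₀ hr] at hk⟩
    induction k with
    | zero =>
      refine ⟨0, ?_⟩
      simp only [hA, if_pos rfl, mem_diff, mem_ball]
      constructor
      · calc dist y x₀ < 2^0 * r := hk
          _ ≤ 2^(0+1) * r := by norm_num; linarith
      · simp [hr.le, not_lt, dist_nonneg]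
    | succ k ih =>
      by_cases h : dist y x₀ < 2^k * r
      · exact ih h
      · refine ⟨k, ?_⟩
        simp only [hA, mem_diff, mem_ball]
        refine ⟨hk, ?_⟩
        rcases Nat.eq_zero_or_pos k with hk0 | hk0
        · subst hk0; simp [not_lt, dist_nonneg]
        · rw [if_neg hk0.ne']
          exact fun hcon => h hcon
  -- pointwise bound on each annulus
  have hbound : ∀ k, ∀ y ∈ A k, f y ≤ ENNReal.ofReal (cseq k) := by
    intro k y hy
    cases k with
    | zero =>
      refine ENNReal.ofReal_le_ofReal ?_
      show Real.exp _ ≤ 1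
      rw [Real.exp_le_one_iff, neg_div]
      have : 0 ≤ ‖y - x₀‖^2 / (4 * t₀) := by positivity
      linarith
    | succ k =>
      have hy2 : ¬ y ∈ ball x₀ (2^(k+1) * r) := by
        have := hy.2
        simpa [hA] using this
      have hd : 2^(k+1) * r ≤ dist y x₀ := not_lt.1 (fun h => hy2 (mem_ball.2 h))
      have hnorm : 2^(k+1) * r ≤ ‖y - x₀‖ := by rwa [← dist_eq_norm]
      refine ENNReal.ofReal_le_ofReal (Real.exp_le_exp.2 ?_)
      show -‖y - x₀‖^2 / (4 * t₀) ≤ -(4^k : ℝ)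
      have hsq : (4:ℝ)^(k+1) * t₀ ≤ ‖y - x₀‖^2 := by
        have h1 : (2^(k+1) * r)^2 ≤ ‖y - x₀‖^2 := by
          apply pow_le_pow_left₀ (by positivity) hnorm
        calc (4:ℝ)^(k+1) * t₀ = (2^(k+1) * r)^2 := by
              rw [mul_pow, ← pow_mul, Real.sq_sqrt ht.le, show (4:ℝ) = 2^2 by norm_num,
                ← pow_mul, Nat.mul_comm]
          _ ≤ ‖y - x₀‖^2 := h1
      rw [neg_div, neg_le_neg_iff, le_div_iff₀ (by positivity : (0:ℝ) < 4 * t₀)]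
      nlinarith [hsq, pow_succ (4:ℝ) k]
  have h4π : (1:ℝ) ≤ 4 * Real.pi := by nlinarith [Real.pi_gt_three]
  -- bound the integral
  have key : (∫⁻ y, f y ∂μ) ≤ ∑' k, ENNReal.ofReal (cseq k) * μ (A k) := by
    calc (∫⁻ y, f y ∂μ) = ∫⁻ y in ⋃ k, A k, f y ∂μ := by rw [hcover, Measure.restrict_univ]
      _ ≤ ∑' k, ∫⁻ y in A k, f y ∂μ := lintegral_iUnion_le _ _
      _ ≤ ∑' k, ENNReal.ofReal (cseq k) * μ (A k) := by
          refine ENNReal.tsum_le_tsum fun k => ?_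
          calc (∫⁻ y in A k, f y ∂μ) ≤ ∫⁻ _ in A k, ENNReal.ofReal (cseq k) ∂μ :=
                setLIntegral_mono measurable_const (hbound k)
            _ = ENNReal.ofReal (cseq k) * μ (A k) := setLIntegral_const _ _
  have hterm : ∀ k, ENNReal.ofReal (cseq k) * μ (A k) ≤
      (V * ENNReal.ofReal (r^n)) * ENNReal.ofReal (cseq k * ((2:ℝ)^(k+1))^n) := by
    intro k
    have h1 : μ (A k) ≤ V * ENNReal.ofReal ((2^(k+1) * r)^n) :=
      (measure_mono (hsub k)).trans (ball_le_volGrowth n μ x₀ _ (by positivity))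
    calc ENNReal.ofReal (cseq k) * μ (A k)
        ≤ ENNReal.ofReal (cseq k) * (V * ENNReal.ofReal ((2^(k+1) * r)^n)) :=
          mul_le_mul_right h1 _
      _ = (V * ENNReal.ofReal (r^n)) * ENNReal.ofReal (cseq k * ((2:ℝ)^(k+1))^n) := by
          rw [mul_pow, ENNReal.ofReal_mul (by positivity : (0:ℝ) ≤ ((2:ℝ)^(k+1))^n),
            ENNReal.ofReal_mul (cseq_nonneg k)]
          ring
  have hS : ∑' k, ENNReal.ofReal (cseq k * ((2:ℝ)^(k+1))^n) ≤ ENNReal.ofReal (2 * Mconst n) := by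
    calc ∑' k, ENNReal.ofReal (cseq k * ((2:ℝ)^(k+1))^n)
        ≤ ∑' k, ENNReal.ofReal (Mconst n * (1/2)^k) :=
          ENNReal.tsum_le_tsum fun k => ENNReal.ofReal_le_ofReal (cseq_bound n hn k)
      _ = ENNReal.ofReal (∑' k, Mconst n * (1/2)^k) :=
          (ENNReal.ofReal_tsum_of_nonneg
            (fun k => mul_nonneg (Mconst_pos n).le (by positivity))
            ((summable_geometric_two).mul_left _)).symm
      _ = ENNReal.ofReal (2 * Mconst n) := by rw [tsum_mul_left, tsum_geometric_two]; ring_nf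
  have hI : (∫⁻ y, f y ∂μ) ≤ (V * ENNReal.ofReal (r^n)) * ENNReal.ofReal (2 * Mconst n) := by
    calc (∫⁻ y, f y ∂μ) ≤ ∑' k, ENNReal.ofReal (cseq k) * μ (A k) := key
      _ ≤ ∑' k, (V * ENNReal.ofReal (r^n)) * ENNReal.ofReal (cseq k * ((2:ℝ)^(k+1))^n) :=
          ENNReal.tsum_le_tsum hterm
      _ = (V * ENNReal.ofReal (r^n)) * ∑' k, ENNReal.ofReal (cseq k * ((2:ℝ)^(k+1))^n) :=
          ENNReal.tsum_mul_left
      _ ≤ (V * ENNReal.ofReal (r^n)) * ENNReal.ofReal (2 * Mconst n) := mul_le_mul_right hS _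
  have hP : (4 * Real.pi * t₀) ^ (-(n:ℝ)/2) * r^n ≤ 1 := by
    have hrn : r^n = t₀ ^ ((n:ℝ)/2) := by
      rw [← Real.rpow_natCast r n, hr_def, Real.sqrt_eq_rpow, ← Real.rpow_mul ht.le]
      congr 1; ring
    have hsplit : (4 * Real.pi * t₀) ^ (-(n:ℝ)/2) =
        (4 * Real.pi) ^ (-(n:ℝ)/2) * t₀ ^ (-(n:ℝ)/2) :=
      Real.mul_rpow (by positivity) ht.le
    have h1 : (4 * Real.pi) ^ (-(n:ℝ)/2) ≤ 1 := by
      apply Real.rpow_le_one_of_one_le_of_nonpos h4π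
      have : (0:ℝ) ≤ (n:ℝ) := Nat.cast_nonneg n
      linarith
    have h2 : t₀ ^ (-(n:ℝ)/2) * t₀ ^ ((n:ℝ)/2) = 1 := by
      rw [← Real.rpow_add ht, show (-(n:ℝ)/2 + (n:ℝ)/2) = 0 by ring, Real.rpow_zero]
    calc (4 * Real.pi * t₀) ^ (-(n:ℝ)/2) * r^n
        = (4 * Real.pi) ^ (-(n:ℝ)/2) * (t₀ ^ (-(n:ℝ)/2) * t₀ ^ ((n:ℝ)/2)) := by
          rw [hsplit, hrn]; ring
      _ = (4 * Real.pi) ^ (-(n:ℝ)/2) := by rw [h2, mul_one]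
      _ ≤ 1 := h1
  show ENNReal.ofReal ((4 * Real.pi * t₀) ^ (-(n:ℝ)/2)) * (∫⁻ y, f y ∂μ) ≤
      ENNReal.ofReal (2 * Mconst n) * V
  calc ENNReal.ofReal ((4 * Real.pi * t₀) ^ (-(n:ℝ)/2)) * (∫⁻ y, f y ∂μ)
      ≤ ENNReal.ofReal ((4 * Real.pi * t₀) ^ (-(n:ℝ)/2)) *
          ((V * ENNReal.ofReal (r^n)) * ENNReal.ofReal (2 * Mconst n)) := mul_le_mul_right hI _
    _ = ENNReal.ofReal ((4 * Real.pi * t₀) ^ (-(n:ℝ)/2) * r^n) *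
          (ENNReal.ofReal (2 * Mconst n) * V) := by
        rw [ENNReal.ofReal_mul (Real.rpow_nonneg (by positivity) _)]; ring
    _ ≤ 1 * (ENNReal.ofReal (2 * Mconst n) * V) :=
        mul_le_mul_left (ENNReal.ofReal_le_one.2 hP) _
    _ = ENNReal.ofReal (2 * Mconst n) * V := one_mul _

theorem stmt_4 (n : ℕ) (hn : 1 ≤ n) :
    ∃ C : ℝ, 0 < C ∧ ∀ μ : Measure (EuclideanSpace ℝ (Fin (n + 1))),
      ENNReal.ofReal C⁻¹ * entropyE n μ ≤ volGrowth n μ ∧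
        volGrowth n μ ≤ ENNReal.ofReal C * entropyE n μ := by
  have hπ : 0 < Real.pi := Real.pi_pos
  have hM : 0 < Mconst n := Mconst_pos n
  have hexp_pos : (0:ℝ) < Real.exp 1 * (4 * Real.pi) ^ n := by positivity
  set C : ℝ := 2 * Mconst n + Real.exp 1 * (4 * Real.pi) ^ n with hC_def
  have hC : 0 < C := by rw [hC_def]; linarith
  refine ⟨C, hC, fun μ => ?_⟩
  have hEnt : entropyE n μ ≤ ENNReal.ofReal (2 * Mconst n) * volGrowth n μ := by
    unfold entropyE
    exact iSup_le fun x₀ => iSup_le fun t₀ => iSup_le fun ht => Fe_le n hn μ x₀ t₀ ht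
  constructor
  · calc ENNReal.ofReal C⁻¹ * entropyE n μ
        ≤ ENNReal.ofReal C⁻¹ * (ENNReal.ofReal (2 * Mconst n) * volGrowth n μ) :=
          mul_le_mul_right hEnt _
      _ = ENNReal.ofReal (C⁻¹ * (2 * Mconst n)) * volGrowth n μ := by
          rw [ENNReal.ofReal_mul (inv_nonneg.2 hC.le), mul_assoc]
      _ ≤ 1 * volGrowth n μ := by
          refine mul_le_mul_left (ENNReal.ofReal_le_one.2 ?_) _
          have h2M : 2 * Mconst n ≤ C := by rw [hC_def]; linarith
          calc C⁻¹ * (2 * Mconst n) ≤ C⁻¹ * C :=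
                mul_le_mul_of_nonneg_left h2M (inv_nonneg.2 hC.le)
            _ = 1 := inv_mul_cancel₀ hC.ne'
      _ = volGrowth n μ := one_mul _
  · unfold volGrowth
    refine iSup_le fun x => iSup_le fun R => iSup_le fun hR => ?_
    rw [ENNReal.div_le_iff ((ENNReal.ofReal_pos.2 (pow_pos hR n)).ne') ENNReal.ofReal_ne_top]
    have h1 : (0:ℝ) ≤ R ^ n := by positivity
    calc μ (ball x R)
        ≤ ENNReal.ofReal (Real.exp 1 * (4 * Real.pi) ^ n * R ^ n) * entropyE n μ :=
          ball_le_entropy n μ x R hR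
      _ ≤ ENNReal.ofReal (C * R ^ n) * entropyE n μ := by
          refine mul_le_mul_left (ENNReal.ofReal_le_ofReal ?_) _
          have hCK : Real.exp 1 * (4 * Real.pi) ^ n ≤ C := by rw [hC_def]; linarith
          exact mul_le_mul_of_nonneg_right hCK h1
      _ = ENNReal.ofReal C * entropyE n μ * ENNReal.ofReal (R ^ n) := by
          rw [ENNReal.ofReal_mul hC.le]; ring
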